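/- Klein-type inequality: for strictly positive matrices ρ, σ and a non-affine operator convex (hence strictly convex) function f, S_f(ρ‖σ) ≥ f(Tr(σ)/Tr(ρ)) · Tr(ρ), with equality if and only if ρ/Tr(ρ) = σ/Tr(σ). -/

import Mathlib

open Matrix Kronecker
open scoped ComplexOrder

noncomputable def applyFun {n : Type*} [Fintype n] [DecidableEq n]
    (f : ℝ → ℝ) (A : Matrix n n ℂ) : Matrix n n ℂ := by
  classical exact
    if hA : A.IsHermitian then
      (hA.eigenvectorUnitary : Matrix n n ℂ) *
        Matrix.diagonal (fun i => (f (hA.eigenvalues i) : ℂ)) *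
        (star (hA.eigenvectorUnitary : Matrix n n ℂ))
    else 0

noncomputable def msqrt {n : Type*} [Fintype n] [DecidableEq n]
    (A : Matrix n n ℂ) : Matrix n n ℂ := by
  classical exact if h : A.PosSemidef then
    (h.1.eigenvectorUnitary : Matrix n n ℂ) *
      Matrix.diagonal ((↑) ∘ Real.sqrt ∘ h.1.eigenvalues) *
      (star (h.1.eigenvectorUnitary : Matrix n n ℂ)) else 0

def vecOf {m n : Type*} (A : Matrix m n ℂ) : m × n → ℂ := fun p => A p.1 p.2

noncomputable def Srel {n : Type*} [Fintype n] [DecidableEq n]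
    (f : ℝ → ℝ) (ρ σ : Matrix n n ℂ) : ℝ :=
  (star (vecOf (msqrt ρ)) ⬝ᵥ (applyFun f (σ ⊗ₖ (ρ⁻¹)ᵀ) *ᵥ vecOf (msqrt ρ))).re

def OperatorConvexOn (I : Set ℝ) (f : ℝ → ℝ) : Prop :=
  ∀ (n : ℕ) (A B : Matrix (Fin n) (Fin n) ℂ) (hA : A.IsHermitian) (hB : B.IsHermitian),
    (∀ i, hA.eigenvalues i ∈ I) → (∀ i, hB.eigenvalues i ∈ I) →
    ∀ lam : ℝ, 0 ≤ lam → lam ≤ 1 →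
      ((lam : ℂ) • applyFun f A + ((1 - lam : ℝ) : ℂ) • applyFun f B -
        applyFun f ((lam : ℂ) • A + ((1 - lam : ℝ) : ℂ) • B)).PosSemidef

noncomputable def entf {n : Type*} [Fintype n] [DecidableEq n]
    (f : ℝ → ℝ) (ρ : Matrix n n ℂ) : ℝ :=
  -(Matrix.trace (ρ * applyFun f ρ⁻¹)).re

noncomputable def ptraceB {α β : Type*} [Fintype β]
    (M : Matrix (α × β) (α × β) ℂ) : Matrix α α ℂ :=
  Matrix.of fun i j => ∑ k, M (i, k) (j, k)

noncomputable def ptraceA {α β : Type*} [Fintype α]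
    (M : Matrix (α × β) (α × β) ℂ) : Matrix β β ℂ :=
  Matrix.of fun i j => ∑ k, M (k, i) (k, j)

def NonAffineOn (I : Set ℝ) (f : ℝ → ℝ) : Prop :=
  ¬ ∃ c b : ℝ, ∀ t ∈ I, f t = c * t + b

/-!
Write `Srel f ρ σ = ⟨v, f(K) v⟩` with `v = vec √ρ` and `K = σ ⊗ (ρ⁻¹)ᵀ`. Expanding `v` in an
eigenbasis of `K` turns this into `∑ₖ wₖ f(μₖ)` with weights `wₖ ≥ 0` summing to `⟨v, v⟩ = Tr ρ`
and barycentre `∑ₖ wₖ μₖ / Tr ρ = ⟨v, K v⟩ / Tr ρ = Tr σ / Tr ρ`, so the inequality is Jensen's.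
Equality forces `v` into one eigenspace of `K`, i.e. `K v = c v`, which unwinds to `σ = c ρ`,
provided `f` is strictly convex.

Strict convexity is the operator-convex input. If `f` were not strictly convex, subtracting a
supporting line would give an operator convex `g ≥ 0` with two zeros `x ≠ a`. Operator convexity
applied to `A = [[(a+x)/2, (a-x)/2], [(a-x)/2, (a+x)/2]]` (eigenvalues `a`, `x`) and
`B = diag(x, b)` at the vector `e₀` forces `g` to vanish on the spectrum of `(A + B)/2`, hence at
its diagonal entry `(a + x + 2b)/4`. Letting `b` range over `(0, ∞)` spreads the zeros of `g` over
all of `(0, ∞)`, so `f` would be affine.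
-/

section FunctionalCalculus

variable {n : Type*} [Fintype n] [DecidableEq n] {A : Matrix n n ℂ}

lemma applyFun_eq_cfc (hA : A.IsHermitian) (f : ℝ → ℝ) : applyFun f A = cfc f A := by
  rw [hA.cfc_eq, applyFun, dif_pos hA, IsHermitian.cfc, Unitary.conjStarAlgAut_apply]
  rfl

lemma Matrix.IsHermitian.continuousOn_spectrum (hA : A.IsHermitian) (f : ℝ → ℝ) :
    ContinuousOn f (spectrum ℝ A) :=
  (hA.spectrum_real_eq_range_eigenvalues ▸ Set.finite_range _).continuousOn f

lemma applyFun_id (hA : A.IsHermitian) : applyFun id A = A := by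
  rw [applyFun_eq_cfc hA, cfc_id ℝ A hA.isSelfAdjoint]

lemma applyFun_eq_zero (hA : A.IsHermitian) {f : ℝ → ℝ} (hf : ∀ k, f (hA.eigenvalues k) = 0) :
    applyFun f A = 0 := by
  rw [applyFun_eq_cfc hA, ← cfc_zero ℝ A]
  refine cfc_congr fun t ht => ?_
  obtain ⟨k, rfl⟩ := hA.spectrum_real_eq_range_eigenvalues ▸ ht
  exact hf k

lemma applyFun_sub_affine (hA : A.IsHermitian) (f : ℝ → ℝ) (α β : ℝ) :
    applyFun (fun t => f t - (α * t + β)) A = applyFun f A - ((α : ℂ) • A + (β : ℂ) • 1) := by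
  have hc := hA.continuousOn_spectrum
  rw [applyFun_eq_cfc hA, applyFun_eq_cfc hA, cfc_sub _ _ _ (hc _) (hc _),
    cfc_add _ _ _ (hc _) (hc _), cfc_const_mul _ _ _ (hc _), cfc_id' ℝ A hA.isSelfAdjoint,
    cfc_const _ _ hA.isSelfAdjoint, Algebra.algebraMap_eq_smul_one]
  rfl

lemma isHermitian_algebraMap (t : ℝ) : (algebraMap ℝ (Matrix n n ℂ) t).IsHermitian :=
  IsSelfAdjoint.algebraMap _ (IsSelfAdjoint.all t)

lemma applyFun_algebraMap (f : ℝ → ℝ) (t : ℝ) :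
    applyFun f (algebraMap ℝ (Matrix n n ℂ) t) = algebraMap ℝ (Matrix n n ℂ) (f t) := by
  rw [applyFun_eq_cfc (isHermitian_algebraMap t), cfc_algebraMap]

lemma eigenvalues_algebraMap [Nonempty n] (t : ℝ) (k : n) :
    (isHermitian_algebraMap (n := n) t).eigenvalues k = t := by
  have h := (isHermitian_algebraMap (n := n) t).eigenvalues_mem_spectrum_real k
  rwa [spectrum.scalar_eq, Set.mem_singleton_iff] at h

lemma msqrt_eq_cfc (hA : A.PosSemidef) : msqrt A = cfc Real.sqrt A := by
  rw [hA.1.cfc_eq, msqrt, dif_pos hA, IsHermitian.cfc, Unitary.conjStarAlgAut_apply]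
  rfl

lemma msqrt_isHermitian (hA : A.PosSemidef) : (msqrt A).IsHermitian := by
  rw [msqrt_eq_cfc hA]
  exact cfc_predicate _ _

lemma msqrt_mul_self (hA : A.PosSemidef) : msqrt A * msqrt A = A := by
  rw [msqrt_eq_cfc hA, ← cfc_mul _ _ _ (hA.1.continuousOn_spectrum _)
    (hA.1.continuousOn_spectrum _)]
  conv_rhs => rw [← cfc_id' ℝ A hA.1.isSelfAdjoint]
  refine cfc_congr fun t ht => Real.mul_self_sqrt ?_
  obtain ⟨i, rfl⟩ := hA.1.spectrum_real_eq_range_eigenvalues ▸ ht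
  exact hA.eigenvalues_nonneg i

lemma isUnit_det_msqrt (hA : A.PosDef) : IsUnit (msqrt A).det := by
  have h : IsUnit (msqrt A * msqrt A) := by rw [msqrt_mul_self hA.posSemidef]; exact hA.isUnit
  exact (isUnit_iff_isUnit_det _).mp (isUnit_of_mul_isUnit_left h)

end FunctionalCalculus

namespace Matrix.IsHermitian

variable {n : Type*} [Fintype n] [DecidableEq n] {A : Matrix n n ℂ} (hA : A.IsHermitian)

noncomputable def eigenCoord (v : n → ℂ) : n → ℂ :=
  star (hA.eigenvectorUnitary : Matrix n n ℂ) *ᵥ v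

lemma eigenvectorUnitary_mulVec_eigenCoord (v : n → ℂ) :
    (hA.eigenvectorUnitary : Matrix n n ℂ) *ᵥ hA.eigenCoord v = v := by
  rw [eigenCoord, mulVec_mulVec, Unitary.mul_star_self_of_mem hA.eigenvectorUnitary.2, one_mulVec]

lemma eigenCoord_injective : Function.Injective hA.eigenCoord :=
  Function.LeftInverse.injective hA.eigenvectorUnitary_mulVec_eigenCoord

lemma eigenCoord_smul (c : ℂ) (v : n → ℂ) : hA.eigenCoord (c • v) = c • hA.eigenCoord v :=
  mulVec_smul _ c v

lemma eigenCoord_applyFun_mulVec (f : ℝ → ℝ) (v : n → ℂ) (k : n) :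
    hA.eigenCoord (applyFun f A *ᵥ v) k = f (hA.eigenvalues k) * hA.eigenCoord v k := by
  rw [eigenCoord, applyFun, dif_pos hA, mulVec_mulVec, ← Matrix.mul_assoc, ← Matrix.mul_assoc,
    Unitary.coe_star_mul_self, Matrix.one_mul, ← mulVec_mulVec, mulVec_diagonal]
  rfl

lemma eigenCoord_mulVec (v : n → ℂ) (k : n) :
    hA.eigenCoord (A *ᵥ v) k = hA.eigenvalues k * hA.eigenCoord v k := by
  have h := hA.eigenCoord_applyFun_mulVec id v k
  rwa [applyFun_id hA] at h

lemma star_dotProduct_eq_sum_eigenCoord (v w : n → ℂ) :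
    star v ⬝ᵥ w = ∑ k, star (hA.eigenCoord v k) * hA.eigenCoord w k := by
  have hv : star v ᵥ* (hA.eigenvectorUnitary : Matrix n n ℂ) = star (hA.eigenCoord v) := by
    rw [eigenCoord, star_mulVec, star_eq_conjTranspose, conjTranspose_conjTranspose]
  conv_lhs => rw [← hA.eigenvectorUnitary_mulVec_eigenCoord w]
  rw [dotProduct_mulVec, hv]
  rfl

lemma re_star_dotProduct_applyFun_mulVec (f : ℝ → ℝ) (v : n → ℂ) :
    (star v ⬝ᵥ (applyFun f A *ᵥ v)).re =
      ∑ k, Complex.normSq (hA.eigenCoord v k) * f (hA.eigenvalues k) := by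
  simp only [hA.star_dotProduct_eq_sum_eigenCoord, hA.eigenCoord_applyFun_mulVec, Complex.re_sum]
  refine Finset.sum_congr rfl fun k _ => ?_
  rw [mul_left_comm, Complex.star_def, ← Complex.normSq_eq_conj_mul_self, ← Complex.ofReal_mul,
    Complex.ofReal_re, mul_comm]

lemma re_star_dotProduct_mulVec (v : n → ℂ) :
    (star v ⬝ᵥ (A *ᵥ v)).re = ∑ k, Complex.normSq (hA.eigenCoord v k) * hA.eigenvalues k := by
  have h := hA.re_star_dotProduct_applyFun_mulVec id v
  rwa [applyFun_id hA] at h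

lemma re_star_dotProduct_self (v : n → ℂ) :
    (star v ⬝ᵥ v).re = ∑ k, Complex.normSq (hA.eigenCoord v k) := by
  simp only [hA.star_dotProduct_eq_sum_eigenCoord, Complex.re_sum, Complex.star_def,
    ← Complex.normSq_eq_conj_mul_self, Complex.ofReal_re]

lemma mulVec_eq_smul_iff (v : n → ℂ) (r : ℝ) :
    A *ᵥ v = (r : ℂ) • v ↔ ∀ k, hA.eigenCoord v k ≠ 0 → hA.eigenvalues k = r := by
  rw [← hA.eigenCoord_injective.eq_iff, funext_iff, eigenCoord_smul]
  refine forall_congr' fun k => ?_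
  rw [eigenCoord_mulVec, Pi.smul_apply, smul_eq_mul, mul_eq_mul_right_iff, Complex.ofReal_inj,
    or_iff_not_imp_right]

end Matrix.IsHermitian

lemma Matrix.IsHermitian.applyFun_mulVec_of_mulVec_eq_smul {n : Type*} [Fintype n] [DecidableEq n]
    {A : Matrix n n ℂ} (hA : A.IsHermitian) (f : ℝ → ℝ) {v : n → ℂ} {r : ℝ}
    (hv : A *ᵥ v = (r : ℂ) • v) : applyFun f A *ᵥ v = (f r : ℂ) • v := by
  rw [hA.mulVec_eq_smul_iff] at hv
  refine hA.eigenCoord_injective (funext fun k => ?_)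
  rw [hA.eigenCoord_applyFun_mulVec, hA.eigenCoord_smul, Pi.smul_apply, smul_eq_mul]
  by_cases hk : hA.eigenCoord v k = 0
  · simp [hk]
  · rw [hv k hk]

lemma Matrix.IsHermitian.eigenvalues_fin_two_eq_or_eq {M : Matrix (Fin 2) (Fin 2) ℂ}
    (hM : M.IsHermitian) {a x : ℝ} (htr : M 0 0 + M 1 1 = a + x) (hdet : M.det = a * x)
    (k : Fin 2) : hM.eigenvalues k = a ∨ hM.eigenvalues k = x := by
  have h := hM.eigenvalues_mem_spectrum_real k
  rw [spectrum.mem_iff, isUnit_iff_isUnit_det, isUnit_iff_ne_zero, not_not, det_fin_two] at h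
  rw [det_fin_two] at hdet
  simp only [sub_apply, algebraMap_matrix_apply, Fin.isValue, ↓reduceIte, Complex.coe_algebraMap,
    zero_ne_one, one_ne_zero, zero_sub, mul_neg, neg_mul, neg_neg] at h
  have h' : ((hM.eigenvalues k : ℂ) - a) * ((hM.eigenvalues k : ℂ) - x) = 0 := by
    linear_combination h + (hM.eigenvalues k : ℂ) * htr - hdet
  norm_cast at h'
  rcases mul_eq_zero.mp h' with h | h
  · exact Or.inl (sub_eq_zero.mp h)
  · exact Or.inr (sub_eq_zero.mp h)

lemma Matrix.IsHermitian.eigenCoord_single_zero_ne_zero {C : Matrix (Fin 2) (Fin 2) ℂ}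
    (hC : C.IsHermitian) (h01 : C 0 1 ≠ 0) (k : Fin 2) : hC.eigenCoord (Pi.single 0 1) k ≠ 0 := by
  have heig := congrFun (hC.mulVec_eigenvectorBasis k) 0
  set e := hC.eigenvectorBasis k
  have hcoord : hC.eigenCoord (Pi.single 0 1) k = star (e 0) := by
    simp [eigenCoord, e]
  rw [hcoord, star_ne_zero]
  intro he0
  simp only [mulVec, dotProduct, Fin.sum_univ_two, he0, mul_zero, zero_add, Pi.smul_apply,
    smul_zero] at heig
  have he1 : e 1 = 0 := (mul_eq_zero.mp heig).resolve_left h01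
  refine hC.eigenvectorBasis.orthonormal.ne_zero k ?_
  ext i
  fin_cases i <;> simp [he0, he1, e]

section Jensen

variable {ι : Type*} [Fintype ι] {s : Set ℝ} {f : ℝ → ℝ} {w p : ι → ℝ}

lemma ConvexOn.map_sum_div_mul_le (hf : ConvexOn ℝ s f) (hw : ∀ i, 0 ≤ w i)
    (hp : ∀ i, p i ∈ s) : f ((∑ i, w i * p i) / ∑ i, w i) * ∑ i, w i ≤ ∑ i, w i * f (p i) := by
  rcases (Finset.sum_nonneg fun i _ => hw i).eq_or_lt with hW | hW
  · have hw0 : ∀ i, w i = 0 := fun i =>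
      (Finset.sum_eq_zero_iff_of_nonneg fun i _ => hw i).mp hW.symm i (Finset.mem_univ i)
    simp [hw0]
  have h := hf.map_sum_le (t := Finset.univ) (w := fun i => w i / ∑ j, w j) (p := p)
    (fun i _ => div_nonneg (hw i) hW.le) (by rw [← Finset.sum_div, div_self hW.ne'])
    (fun i _ => hp i)
  simp only [smul_eq_mul, div_mul_eq_mul_div, ← Finset.sum_div] at h
  exact (le_div_iff₀ hW).mp h

lemma StrictConvexOn.sum_mul_eq_map_sum_div_mul_iff (hf : StrictConvexOn ℝ s f)
    (hw : ∀ i, 0 ≤ w i) (hp : ∀ i, p i ∈ s) :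
    ∑ i, w i * f (p i) = f ((∑ i, w i * p i) / ∑ i, w i) * ∑ i, w i ↔
      ∀ i, w i ≠ 0 → p i = (∑ i, w i * p i) / ∑ i, w i := by
  rcases (Finset.sum_nonneg fun i _ => hw i).eq_or_lt with hW | hW
  · have hw0 : ∀ i, w i = 0 := fun i =>
      (Finset.sum_eq_zero_iff_of_nonneg fun i _ => hw i).mp hW.symm i (Finset.mem_univ i)
    simp [hw0]
  set c := (∑ i, w i * p i) / ∑ i, w i with hc
  constructor
  · intro h i hi
    have hconst := (hf.map_sum_eq_iff_of_nonneg (t := Finset.univ)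
      (w := fun i => w i / ∑ j, w j) (p := p) (fun i _ => div_nonneg (hw i) hW.le)
      (by rw [← Finset.sum_div, div_self hW.ne']) (fun i _ => hp i)).mp (by
        simp only [smul_eq_mul, div_mul_eq_mul_div, ← Finset.sum_div, h, ← hc]
        field_simp)
    have hterm : ∀ j, w j * p j = w j * p i := fun j => by
      by_cases hj : w j = 0
      · simp [hj]
      · rw [hconst (Finset.mem_univ j) (div_ne_zero hj hW.ne') (Finset.mem_univ i)
          (div_ne_zero hi hW.ne')]
    rw [hc, Finset.sum_congr rfl fun j _ => hterm j, ← Finset.sum_mul,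
      mul_div_cancel_left₀ _ hW.ne']
  · intro h
    rw [Finset.mul_sum]
    refine Finset.sum_congr rfl fun i _ => ?_
    by_cases hi : w i = 0
    · simp [hi]
    · rw [h i hi, mul_comm]

variable {n : Type*} [Fintype n] [DecidableEq n] {A : Matrix n n ℂ}

theorem ConvexOn.map_div_mul_le_re_dotProduct_applyFun (hf : ConvexOn ℝ s f)
    (hA : A.IsHermitian) (hs : ∀ k, hA.eigenvalues k ∈ s) (v : n → ℂ) :
    f ((star v ⬝ᵥ (A *ᵥ v)).re / (star v ⬝ᵥ v).re) * (star v ⬝ᵥ v).re ≤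
      (star v ⬝ᵥ (applyFun f A *ᵥ v)).re := by
  simp only [hA.re_star_dotProduct_mulVec, hA.re_star_dotProduct_self,
    hA.re_star_dotProduct_applyFun_mulVec]
  exact hf.map_sum_div_mul_le (fun k => Complex.normSq_nonneg _) hs

theorem StrictConvexOn.re_dotProduct_applyFun_eq_iff (hf : StrictConvexOn ℝ s f)
    (hA : A.IsHermitian) (hs : ∀ k, hA.eigenvalues k ∈ s) (v : n → ℂ) :
    (star v ⬝ᵥ (applyFun f A *ᵥ v)).re =
        f ((star v ⬝ᵥ (A *ᵥ v)).re / (star v ⬝ᵥ v).re) * (star v ⬝ᵥ v).re ↔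
      A *ᵥ v = (((star v ⬝ᵥ (A *ᵥ v)).re / (star v ⬝ᵥ v).re : ℝ) : ℂ) • v := by
  rw [hA.mulVec_eq_smul_iff]
  simp only [hA.re_star_dotProduct_mulVec, hA.re_star_dotProduct_self,
    hA.re_star_dotProduct_applyFun_mulVec, ne_eq, ← Complex.normSq_eq_zero]
  exact hf.sum_mul_eq_map_sum_div_mul_iff (fun k => Complex.normSq_nonneg _) hs

end Jensen

lemma ConvexOn.add_rightDeriv_mul_sub_le {S : Set ℝ} {f : ℝ → ℝ} {z t : ℝ} (hf : ConvexOn ℝ S f)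
    (hz : z ∈ interior S) (ht : t ∈ S) :
    f z + derivWithin f (Set.Ioi z) z * (t - z) ≤ f t := by
  rcases lt_trichotomy t z with htz | rfl | hzt
  · have h := (hf.slope_le_leftDeriv_of_mem_interior ht hz htz).trans
      (hf.leftDeriv_le_rightDeriv_of_mem_interior hz)
    rw [slope_def_field, div_le_iff₀ (sub_pos.mpr htz)] at h
    linarith
  · simp
  · have h := hf.rightDeriv_le_slope_of_mem_interior hz ht hzt
    rw [slope_def_field, le_div_iff₀ (sub_pos.mpr hzt)] at h
    linarith

-- The weights are written as `OperatorConvexOn` produces them at `lam = 1 / 2`.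
lemma Matrix.PosDef.half_smul_add {m : Type*} [Fintype m] {A B : Matrix m m ℂ} (hA : A.PosDef)
    (hB : B.PosDef) : (((1 / 2 : ℝ) : ℂ) • A + ((1 - 1 / 2 : ℝ) : ℂ) • B).PosDef :=
  (hA.smul (by norm_num)).add (hB.smul (by norm_num))

namespace OperatorConvexOn

variable {I : Set ℝ} {f g : ℝ → ℝ}

lemma convexOn (hI : Convex ℝ I) (hf : OperatorConvexOn I f) : ConvexOn ℝ I f := by
  refine ⟨hI, fun x hx y hy a b ha hb hab => ?_⟩
  obtain rfl : b = 1 - a := by linarith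
  have h := hf 1 _ _ (isHermitian_algebraMap x) (isHermitian_algebraMap y)
    (fun k => (eigenvalues_algebraMap x k).symm ▸ hx)
    (fun k => (eigenvalues_algebraMap y k).symm ▸ hy) a ha (by linarith)
  have hsmul : ∀ (c : ℝ) (M : Matrix (Fin 1) (Fin 1) ℂ), (c : ℂ) • M = c • M := fun _ _ => rfl
  rw [applyFun_algebraMap, applyFun_algebraMap] at h
  simp only [hsmul, Algebra.smul_def, ← map_mul, ← map_add] at h
  rw [applyFun_algebraMap, ← map_sub, algebraMap_eq_diagonal, posSemidef_diagonal_iff] at h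
  have h0 := h 0
  simp only [Pi.algebraMap_apply, Complex.coe_algebraMap, Complex.zero_le_real] at h0
  simp only [smul_eq_mul]
  linarith

lemma sub_affine (hf : OperatorConvexOn I f) (α β : ℝ) :
    OperatorConvexOn I (fun t => f t - (α * t + β)) := by
  intro m A B hA hB hAI hBI lam h0 h1
  have hC : ((lam : ℂ) • A + ((1 - lam : ℝ) : ℂ) • B).IsHermitian :=
    ((IsSelfAdjoint.all lam).smul hA.isSelfAdjoint).add
      ((IsSelfAdjoint.all (1 - lam)).smul hB.isSelfAdjoint)
  convert hf m A B hA hB hAI hBI lam h0 h1 using 1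
  rw [applyFun_sub_affine hA, applyFun_sub_affine hB, applyFun_sub_affine hC]
  push_cast
  module

lemma map_eigenvalues_eq_zero (hg : OperatorConvexOn (Set.Ioi 0) g)
    (hg0 : ∀ t ∈ Set.Ioi 0, 0 ≤ g t) {m : ℕ} {A B : Matrix (Fin m) (Fin m) ℂ} (hA : A.PosDef)
    (hB : B.PosDef) (hC : (((1 / 2 : ℝ) : ℂ) • A + ((1 - 1 / 2 : ℝ) : ℂ) • B).IsHermitian)
    {u : Fin m → ℂ} (hAu : applyFun g A *ᵥ u = 0) (hBu : applyFun g B *ᵥ u = 0) (k : Fin m)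
    (hk : hC.eigenCoord u k ≠ 0) : g (hC.eigenvalues k) = 0 := by
  have hCpos : ∀ j, 0 < hC.eigenvalues j := (hA.half_smul_add hB).eigenvalues_pos
  have hpsd := (hg m A B hA.1 hB.1 hA.eigenvalues_pos hB.eigenvalues_pos (1 / 2) (by norm_num)
    (by norm_num)).re_dotProduct_nonneg u
  simp only [sub_mulVec, add_mulVec, smul_mulVec, hAu, hBu, smul_zero, zero_add, zero_sub,
    dotProduct_neg, RCLike.re_to_complex, Complex.neg_re, Left.nonneg_neg_iff,
    hC.re_star_dotProduct_applyFun_mulVec] at hpsd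
  have hterms : ∀ j ∈ Finset.univ,
      0 ≤ Complex.normSq (hC.eigenCoord u j) * g (hC.eigenvalues j) :=
    fun j _ => mul_nonneg (Complex.normSq_nonneg _) (hg0 _ (hCpos j))
  have hzero := (Finset.sum_eq_zero_iff_of_nonneg hterms).mp
    (le_antisymm hpsd (Finset.sum_nonneg hterms)) k (Finset.mem_univ k)
  exact (mul_eq_zero.mp hzero).resolve_left (Complex.normSq_pos.mpr hk).ne'

theorem map_eq_zero_of_map_eq_zero (hg : OperatorConvexOn (Set.Ioi 0) g)
    (hg0 : ∀ t ∈ Set.Ioi 0, 0 ≤ g t) {a x b : ℝ} (ha : 0 < a) (hx : 0 < x) (hb : 0 < b)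
    (hax : a ≠ x) (hga : g a = 0) (hgx : g x = 0) : g ((a + x + 2 * b) / 4) = 0 := by
  set A : Matrix (Fin 2) (Fin 2) ℂ :=
    !![((a + x) / 2 : ℝ), ((a - x) / 2 : ℝ); ((a - x) / 2 : ℝ), ((a + x) / 2 : ℝ)]
  set B : Matrix (Fin 2) (Fin 2) ℂ := diagonal ![(x : ℂ), (b : ℂ)]
  have hAh : A.IsHermitian := by
    ext i j
    fin_cases i <;> fin_cases j <;> simp [A, conjTranspose_apply]
  have hAeig : ∀ k, hAh.eigenvalues k = a ∨ hAh.eigenvalues k = x :=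
    hAh.eigenvalues_fin_two_eq_or_eq (by simp [A]) (by
      simp only [A, det_fin_two, of_apply, cons_val', cons_val_zero, cons_val_one, cons_val_fin_one]
      push_cast
      ring)
  have hgA : applyFun g A = 0 := applyFun_eq_zero hAh fun k => by
    rcases hAeig k with h | h <;> rw [h] <;> assumption
  have hA : A.PosDef := hAh.posDef_iff_eigenvalues_pos.mpr fun k => by
    rcases hAeig k with h | h <;> rw [h] <;> assumption
  have hB : B.PosDef := posDef_diagonal_iff.mpr fun i => by
    fin_cases i <;> simpa
  have hBu : B *ᵥ Pi.single 0 1 = (x : ℂ) • Pi.single 0 1 := by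
    rw [diagonal_mulVec_single]; ext i; fin_cases i <;> simp
  have hgBu : applyFun g B *ᵥ Pi.single 0 1 = 0 := by
    rw [hB.1.applyFun_mulVec_of_mulVec_eq_smul g hBu, hgx]; simp
  set C := ((1 / 2 : ℝ) : ℂ) • A + ((1 - 1 / 2 : ℝ) : ℂ) • B
  have hCpd : C.PosDef := hA.half_smul_add hB
  have hgC : applyFun g C = 0 := applyFun_eq_zero hCpd.1 fun k =>
    hg.map_eigenvalues_eq_zero hg0 hA hB hCpd.1 (by rw [hgA, zero_mulVec]) hgBu k
      (hCpd.1.eigenCoord_single_zero_ne_zero (by simp [C, A, B, sub_eq_zero, hax]) k)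
  have hC11 : C 1 1 = ((a + x + 2 * b) / 4 : ℝ) := by
    simp only [C, A, B, Matrix.add_apply, Matrix.smul_apply, of_apply, diagonal_apply_eq, cons_val', cons_val_one,
      cons_val_fin_one, smul_eq_mul]
    push_cast
    ring
  have hJ := (hg.convexOn (convex_Ioi 0)).map_div_mul_le_re_dotProduct_applyFun hCpd.1
    hCpd.eigenvalues_pos (Pi.single 1 1)
  refine le_antisymm ?_ (hg0 _ (by simp only [Set.mem_Ioi]; positivity))
  simpa [hgC, hC11] using hJ

theorem eqOn_zero (hg : OperatorConvexOn (Set.Ioi 0) g) (hg0 : ∀ t ∈ Set.Ioi 0, 0 ≤ g t)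
    {x y : ℝ} (hx : 0 < x) (hy : 0 < y) (hxy : x ≠ y) (hgx : g x = 0) (hgy : g y = 0) :
    Set.EqOn g 0 (Set.Ioi 0) := by
  set Z := {t ∈ Set.Ioi (0 : ℝ) | g t ≤ 0}
  have hZ : Z.OrdConnected := ((hg.convexOn (convex_Ioi 0)).convex_le 0).ordConnected
  have hmem : ∀ {t}, t ∈ Z ↔ 0 < t ∧ g t = 0 := fun {t} =>
    ⟨fun h => ⟨h.1, le_antisymm h.2 (hg0 t h.1)⟩, fun h => ⟨h.1, h.2.le⟩⟩
  have hstep : ∀ a ∈ Z, ∀ z ∈ Z, a ≠ z → ∀ b > 0, (a + z + 2 * b) / 4 ∈ Z := by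
    intro a ha z hz haz b hb
    rw [hmem] at ha hz ⊢
    exact ⟨by linarith, hg.map_eq_zero_of_map_eq_zero hg0 ha.1 hz.1 hb haz ha.2 hz.2⟩
  have hup : ∀ z ∈ Z, ∀ t, z ≤ t → t ∈ Z := by
    intro z hz t hzt
    obtain ⟨w, hw, hwz⟩ : ∃ w ∈ Z, w ≠ z := by
      by_cases h : x = z
      · exact ⟨y, hmem.mpr ⟨hy, hgy⟩, fun h' => hxy (h.trans h'.symm)⟩
      · exact ⟨x, hmem.mpr ⟨hx, hgx⟩, h⟩
    have hfar := hstep w hw z hz hwz (2 * t) (by linarith [(hmem.mp hz).1])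
    exact hZ.out hz hfar ⟨hzt, by linarith [(hmem.mp hw).1, (hmem.mp hz).1]⟩
  have hdown : ∀ z ∈ Z, 7 / 8 * z ∈ Z := by
    intro z hz
    have hz0 := (hmem.mp hz).1
    have h := hstep (2 * z) (hup z hz _ (by linarith)) z hz (by linarith) (z / 4) (by positivity)
    convert h using 1
    ring
  have hpow : ∀ k : ℕ, (7 / 8 : ℝ) ^ k * x ∈ Z := by
    intro k
    induction k with
    | zero => simpa using hmem.mpr ⟨hx, hgx⟩
    | succ k ih => simpa [pow_succ, mul_assoc, mul_comm, mul_left_comm] using hdown _ ih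
  intro t ht
  obtain ⟨k, hk⟩ := exists_pow_lt_of_lt_one (div_pos ht hx) (by norm_num : (7 / 8 : ℝ) < 1)
  exact (hmem.mp (hup _ (hpow k) t ((lt_div_iff₀ hx).mp hk).le)).2

theorem strictConvexOn_Ioi (hf : OperatorConvexOn (Set.Ioi 0) f)
    (hna : NonAffineOn (Set.Ioi 0) f) : StrictConvexOn ℝ (Set.Ioi 0) f := by
  have hconv := hf.convexOn (convex_Ioi 0)
  refine ⟨convex_Ioi 0, fun x hx y hy hxy a b ha hb hab => ?_⟩
  by_contra! hle
  set z := a • x + b • y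
  have hz : z ∈ interior (Set.Ioi (0 : ℝ)) := by
    rw [interior_Ioi]; exact convex_Ioi 0 hx hy ha.le hb.le hab
  set m := derivWithin f (Set.Ioi z) z
  set g := fun t => f t - (m * t + (f z - m * z))
  have hg0 : ∀ t ∈ Set.Ioi 0, 0 ≤ g t := fun t ht => by
    have := hconv.add_rightDeriv_mul_sub_le hz ht
    simp only [g]; linarith
  have hgxy : a * g x + b * g y ≤ 0 := by
    simp only [g, z, smul_eq_mul] at hle ⊢
    linear_combination hle + (m * z - f z) * hab
  have hgx : g x = 0 :=
    le_antisymm (by nlinarith [hg0 x hx, hg0 y hy, mul_nonneg hb.le (hg0 y hy)]) (hg0 x hx)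
  have hgy : g y = 0 :=
    le_antisymm (by nlinarith [hg0 x hx, hg0 y hy, mul_nonneg ha.le (hg0 x hx)]) (hg0 y hy)
  have hzero := (hf.sub_affine m (f z - m * z)).eqOn_zero hg0 hx hy hxy hgx hgy
  refine hna ⟨m, f z - m * z, fun t ht => ?_⟩
  have h := hzero ht
  simp only [Pi.zero_apply] at h
  linarith

end OperatorConvexOn

section Vectorization

lemma vecOf_injective {m l : Type*} : Function.Injective (vecOf : Matrix m l ℂ → m × l → ℂ) :=
  fun _ _ h => Matrix.ext fun i j => congrFun h (i, j)

variable {m l : Type*} [Fintype m] [Fintype l]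

lemma star_vecOf_dotProduct_vecOf (M N : Matrix m l ℂ) :
    star (vecOf M) ⬝ᵥ vecOf N = (Mᴴ * N).trace := by
  simp only [dotProduct, vecOf, Pi.star_apply, Fintype.sum_prod_type, trace, diag, mul_apply,
    conjTranspose_apply]
  exact Finset.sum_comm

lemma kronecker_transpose_mulVec_vecOf (S : Matrix m m ℂ) (R : Matrix l l ℂ) (Q : Matrix m l ℂ) :
    (S ⊗ₖ Rᵀ) *ᵥ vecOf Q = vecOf (S * Q * R) := by
  ext ⟨i, j⟩
  simp only [mulVec, dotProduct, vecOf, kroneckerMap_apply, Fintype.sum_prod_type, mul_apply,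
    transpose_apply, Finset.sum_mul, mul_assoc]
  rw [Finset.sum_comm]
  refine Finset.sum_congr rfl fun k _ => Finset.sum_congr rfl fun k' _ => ?_
  ring

variable [DecidableEq m] {ρ σ : Matrix m m ℂ}

lemma star_vecOf_msqrt_dotProduct_self (hρ : ρ.PosSemidef) :
    star (vecOf (msqrt ρ)) ⬝ᵥ vecOf (msqrt ρ) = ρ.trace := by
  rw [star_vecOf_dotProduct_vecOf, (msqrt_isHermitian hρ).eq, msqrt_mul_self hρ]

lemma kronecker_mulVec_vecOf_msqrt (hρ : ρ.PosDef) (σ : Matrix m m ℂ) :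
    (σ ⊗ₖ (ρ⁻¹)ᵀ) *ᵥ vecOf (msqrt ρ) = vecOf (σ * (msqrt ρ)⁻¹) := by
  have hQ := isUnit_det_msqrt hρ
  have hρQ := msqrt_mul_self hρ.posSemidef
  set Q := msqrt ρ
  rw [kronecker_transpose_mulVec_vecOf, ← hρQ, Matrix.mul_inv_rev, Matrix.mul_assoc,
    Matrix.mul_nonsing_inv_cancel_left _ _ hQ]

lemma star_vecOf_msqrt_dotProduct_kronecker_mulVec (hρ : ρ.PosDef) (σ : Matrix m m ℂ) :
    star (vecOf (msqrt ρ)) ⬝ᵥ ((σ ⊗ₖ (ρ⁻¹)ᵀ) *ᵥ vecOf (msqrt ρ)) = σ.trace := by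
  rw [kronecker_mulVec_vecOf_msqrt hρ, star_vecOf_dotProduct_vecOf,
    (msqrt_isHermitian hρ.posSemidef).eq, ← Matrix.mul_assoc, trace_mul_cycle,
    Matrix.nonsing_inv_mul _ (isUnit_det_msqrt hρ), Matrix.one_mul]

lemma kronecker_mulVec_vecOf_msqrt_eq_smul_iff (hρ : ρ.PosDef) (σ : Matrix m m ℂ) (c : ℂ) :
    (σ ⊗ₖ (ρ⁻¹)ᵀ) *ᵥ vecOf (msqrt ρ) = c • vecOf (msqrt ρ) ↔ σ = c • ρ := by
  have hQ := isUnit_det_msqrt hρ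
  have hρQ := msqrt_mul_self hρ.posSemidef
  rw [kronecker_mulVec_vecOf_msqrt hρ, show c • vecOf (msqrt ρ) = vecOf (c • msqrt ρ) from rfl,
    vecOf_injective.eq_iff]
  set Q := msqrt ρ
  rw [← hρQ]
  constructor
  · intro h
    rw [← smul_mul_assoc, ← h, Matrix.nonsing_inv_mul_cancel_right _ _ hQ]
  · intro h
    rw [h, smul_mul_assoc, Matrix.mul_nonsing_inv_cancel_right _ _ hQ]

end Vectorization

lemma Matrix.PosDef.exists_trace_eq_ofReal_pos {m : Type*} [Fintype m] [Nonempty m]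
    {ρ : Matrix m m ℂ} (hρ : ρ.PosDef) : ∃ a : ℝ, 0 < a ∧ ρ.trace = a := by
  obtain ⟨hre, him⟩ := Complex.pos_iff.mp hρ.trace_pos
  exact ⟨_, hre, Complex.ext rfl (by simp [him])⟩

lemma Matrix.PosDef.eq_smul_iff_inv_trace_smul_eq {m : Type*} [Fintype m] {ρ σ : Matrix m m ℂ}
    (hρ : ρ.PosDef) (hσ : σ.PosDef) :
    σ = ((σ.trace.re / ρ.trace.re : ℝ) : ℂ) • ρ ↔ ρ.trace⁻¹ • ρ = σ.trace⁻¹ • σ := by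
  rcases isEmpty_or_nonempty m with hm | hm
  · exact iff_of_true (Subsingleton.elim _ _) (Subsingleton.elim _ _)
  obtain ⟨a, ha, hρa⟩ := hρ.exists_trace_eq_ofReal_pos
  obtain ⟨b, hb, hσb⟩ := hσ.exists_trace_eq_ofReal_pos
  rw [hρa, hσb, Complex.ofReal_re, Complex.ofReal_re, eq_comm (a := _ • ρ),
    inv_smul_eq_iff₀ (by exact_mod_cast hb.ne'), smul_smul, Complex.ofReal_div, div_eq_mul_inv]

/-- Klein-type inequality `S_f(ρ‖σ) ≥ f(Tr σ / Tr ρ) Tr ρ` with equality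
iff `ρ/Tr ρ = σ/Tr σ`, for non-affine operator convex `f`. -/
theorem Srel_klein {d : ℕ} (f : ℝ → ℝ)
    (hf : OperatorConvexOn (Set.Ioi 0) f) (hna : NonAffineOn (Set.Ioi 0) f)
    (ρ σ : Matrix (Fin d) (Fin d) ℂ) (hρ : ρ.PosDef) (hσ : σ.PosDef) :
    f (σ.trace.re / ρ.trace.re) * ρ.trace.re ≤ Srel f ρ σ ∧
      (Srel f ρ σ = f (σ.trace.re / ρ.trace.re) * ρ.trace.re ↔
        (ρ.trace)⁻¹ • ρ = (σ.trace)⁻¹ • σ) := by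
  have hfs := hf.strictConvexOn_Ioi hna
  have hK : (σ ⊗ₖ (ρ⁻¹)ᵀ).PosDef := hσ.kronecker hρ.inv.transpose
  have hspec : ∀ k, hK.isHermitian.eigenvalues k ∈ Set.Ioi 0 := hK.eigenvalues_pos
  have hnorm := congrArg Complex.re (star_vecOf_msqrt_dotProduct_self hρ.posSemidef)
  have hexp := congrArg Complex.re (star_vecOf_msqrt_dotProduct_kronecker_mulVec hρ σ)
  refine ⟨?_, ?_⟩
  · have h := hfs.convexOn.map_div_mul_le_re_dotProduct_applyFun hK.isHermitian hspec
      (vecOf (msqrt ρ))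
    rwa [hnorm, hexp] at h
  · rw [Srel, ← hnorm, ← hexp, hfs.re_dotProduct_applyFun_eq_iff hK.isHermitian hspec, hnorm,
      hexp, kronecker_mulVec_vecOf_msqrt_eq_smul_iff hρ, hρ.eq_smul_iff_inv_trace_smul_eq hσ]
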